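/- arXiv:2501.08318 — 3 statements merged into one kernel-verified Lean document; each statement's English description precedes it below -/
import Mathlib

section
/- Let 2 ≤ r ≤ 4, let C be a finite nonempty chain disjoint from L_r, and let 1 ≤ i < j ≤ r. Then the adjunct L = L_r ]^{A_j}_{A_i} C (with respect to the adjunct pair (A_i, A_j) of L_r) satisfies Dim(L) = 2. -/
/-- A family of `t` relations is a *realizer* of the relation `le`:
each member is a linear order (on the whole ground set) and their
intersection is exactly `le`.  (In particular each member extends `le`.) -/
def IsRealizer {α : Type*} (le : α → α → Prop) {t : ℕ}
    (R : Fin t → α → α → Prop) : Prop :=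
  (∀ i, IsLinearOrder α (R i)) ∧ ∀ x y, le x y ↔ ∀ i, R i x y

/-- The Dushnik–Miller order dimension of the relation `le`: the least
positive number `t` of linear extensions whose intersection is `le`. -/
noncomputable def orderDim {α : Type*} (le : α → α → Prop) : ℕ :=
  sInf {t | 0 < t ∧ ∃ R : Fin t → α → α → Prop, IsRealizer le R}

/-- An element of a poset is doubly irreducible if it has at most one lower
cover and at most one upper cover. -/
def DoublyIrreducible {α : Type*} [PartialOrder α] (z : α) : Prop :=
  {w | w ⋖ z}.Subsingleton ∧ {w | z ⋖ w}.Subsingleton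

/-- An element is reducible if it is not doubly irreducible. -/
def Reducible {α : Type*} [PartialOrder α] (z : α) : Prop :=
  ¬ DoublyIrreducible z

/-- A lattice is an RC-lattice if any two of its reducible elements are
comparable. -/
def IsRCLattice (α : Type*) [Lattice α] : Prop :=
  ∀ x y : α, Reducible x → Reducible y → (x ≤ y ∨ y ≤ x)


/-- The ground set of the complete fundamental basic block `L_r`:
the chain `A₁ ≺ x₁ ≺ A₂ ≺ ⋯ ≺ x_{r-1} ≺ A_r` (of length `2r-1`,
`A_{i+1}` sitting at position `2i`, `x_{i+1}` at position `2i+1`),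
together with the doubly irreducible elements `c_{ij}` for `1 ≤ i < j ≤ r`. -/
def Lr (r : ℕ) : Type :=
  Fin (2 * r - 1) ⊕ {p : Fin r × Fin r // (p.1 : ℕ) < (p.2 : ℕ)}

namespace Lr

/-- The order of `L_r`: on the chain it is the usual order; `z ≤ c_{ij}` iff
`z ≤ A_i`; `c_{ij} ≤ z` iff `A_j ≤ z`; `c_{ij} ≤ c_{kl}` iff `(i,j) = (k,l)`
or `j ≤ k`. -/
def le {r : ℕ} (x y : Lr r) : Prop :=
  match x, y with
  | Sum.inl k, Sum.inl k' => (k : ℕ) ≤ (k' : ℕ)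
  | Sum.inl k, Sum.inr c => (k : ℕ) ≤ 2 * (c.1.1 : ℕ)
  | Sum.inr c, Sum.inl k => 2 * (c.1.2 : ℕ) ≤ (k : ℕ)
  | Sum.inr c, Sum.inr c' =>
      ((c.1.1 : ℕ) = (c'.1.1 : ℕ) ∧ (c.1.2 : ℕ) = (c'.1.2 : ℕ)) ∨
        (c.1.2 : ℕ) ≤ (c'.1.1 : ℕ)

instance (r : ℕ) : PartialOrder (Lr r) where
  le := le
  le_refl x := by rcases x with k | ⟨p, hp⟩ <;> simp [le]
  le_trans x y z hxy hyz := by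
    rcases x with k | ⟨p, hp⟩ <;> rcases y with k' | ⟨q, hq⟩ <;>
      rcases z with k'' | ⟨t, ht⟩ <;>
      simp only [le] at hxy hyz ⊢ <;> omega
  le_antisymm x y hxy hyx := by
    rcases x with k | ⟨p, hp⟩ <;> rcases y with k' | ⟨q, hq⟩ <;>
      simp only [le] at hxy hyx
    · exact congrArg Sum.inl (Fin.ext (by omega))
    · omega
    · omega
    · have h1 : (p.1 : ℕ) = (q.1 : ℕ) := by omega
      have h2 : (p.2 : ℕ) = (q.2 : ℕ) := by omega
      exact congrArg Sum.inr (Subtype.ext (Prod.ext (Fin.ext h1) (Fin.ext h2)))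

/-- The reducible element `A_{i+1}` of `L_r` (`i` is 0-based). -/
def A {r : ℕ} (i : Fin r) : Lr r :=
  Sum.inl ⟨2 * (i : ℕ), by have := i.2; omega⟩

/-- The doubly irreducible chain element `x_{i+1}` of `L_r` (`i` is 0-based). -/
def X {r : ℕ} (i : Fin (r - 1)) : Lr r :=
  Sum.inl ⟨2 * (i : ℕ) + 1, by have := i.2; omega⟩

/-- The doubly irreducible element `c_{(i+1)(j+1)}` of `L_r`
(`i`, `j` are 0-based). -/
def c {r : ℕ} (i j : Fin r) (h : (i : ℕ) < (j : ℕ)) : Lr r :=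
  Sum.inr ⟨(i, j), h⟩

end Lr


/-- The adjunct order `L₁ ]ᵇₐ L₂` on the disjoint union of two ordered sets
(with respect to the pair `a < b` of the first one):
`x ≤ y` iff both lie in `L₁` and `x ≤ y` there, or both lie in `L₂` and
`x ≤ y` there, or `x ∈ L₁`, `y ∈ L₂` and `x ≤ a`, or `x ∈ L₂`, `y ∈ L₁`
and `b ≤ y`. -/
def adjunctLE {α β : Type*} [LE α] [LE β] (a b : α) :
    α ⊕ β → α ⊕ β → Prop
  | Sum.inl x, Sum.inl y => x ≤ y
  | Sum.inl x, Sum.inr _ => x ≤ a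
  | Sum.inr _, Sum.inl y => b ≤ y
  | Sum.inr x, Sum.inr y => x ≤ y

/-- A subset of a lattice is a sublattice if it is closed under `⊔` and `⊓`. -/
def IsSublatticeSet {α : Type*} [Lattice α] (S : Set α) : Prop :=
  ∀ ⦃x⦄, x ∈ S → ∀ ⦃y⦄, y ∈ S → x ⊔ y ∈ S ∧ x ⊓ y ∈ S

/-- A finite lattice on `n` elements is dismantlable if there is a chain
`L₁ ⊆ L₂ ⊆ ⋯ ⊆ Lₙ` of sublattices with `|Lᵢ| = i` exhausting the lattice. -/
def Dismantlable (α : Type*) [Lattice α] : Prop :=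
  ∃ S : Fin (Nat.card α) → Set α,
    (∀ i, IsSublatticeSet (S i)) ∧
    (∀ i j, i ≤ j → S i ⊆ S j) ∧
    (∀ i, Nat.card (S i) = (i : ℕ) + 1) ∧
    (∀ x : α, ∃ i, x ∈ S i)

/-- The cover graph of a poset: `x` and `y` are adjacent iff one covers the
other. -/
def coverGraph (α : Type*) [PartialOrder α] : SimpleGraph α where
  Adj x y := x ⋖ y ∨ y ⋖ x
  symm := ⟨fun x y h => h.symm⟩
  loopless := ⟨fun x h => by rcases h with h | h <;> exact lt_irrefl x h.lt⟩

/-- The nullity of a poset: (number of covering pairs) − (number of elements)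
+ (number of connected components of the cover graph). -/
noncomputable def nullity (α : Type*) [PartialOrder α] : ℤ :=
  (Nat.card {p : α × α // p.1 ⋖ p.2} : ℤ) - (Nat.card α : ℤ) +
    (Nat.card (coverGraph α).ConnectedComponent : ℤ)

/-- `(a, b)` is an adjunct pair of the lattice `α`: `a < b` and `α` can be
partitioned into nonempty sublattices `K` and `M` with `a, b ∈ K`, `b` not
covering `a` within `K`, such that for `x ∈ K`, `y ∈ M`: `x ≤ y ↔ x ≤ a`
and `y ≤ x ↔ b ≤ x`. -/
def IsAdjunctPair {α : Type*} [Lattice α] (a b : α) : Prop :=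
  a < b ∧ ∃ K M : Set α, K.Nonempty ∧ M.Nonempty ∧ Disjoint K M ∧
    K ∪ M = Set.univ ∧ IsSublatticeSet K ∧ IsSublatticeSet M ∧
    a ∈ K ∧ b ∈ K ∧ (∃ z ∈ K, a < z ∧ z < b) ∧
    ∀ x ∈ K, ∀ y ∈ M, (x ≤ y ↔ x ≤ a) ∧ (y ≤ x ↔ b ≤ x)

/-- `s` is the least upper bound of `x` and `y` with respect to the
relation `le`. -/
def IsLUBRel {γ : Type*} (le : γ → γ → Prop) (x y s : γ) : Prop :=
  le x s ∧ le y s ∧ ∀ z, le x z → le y z → le s z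

/-- `s` is the greatest lower bound of `x` and `y` with respect to the
relation `le`. -/
def IsGLBRel {γ : Type*} (le : γ → γ → Prop) (x y s : γ) : Prop :=
  le s x ∧ le s y ∧ ∀ z, le z x → le z y → le z s

/-- `y` covers `x` with respect to the relation `le`. -/
def RelCovBy {γ : Type*} (le : γ → γ → Prop) (x y : γ) : Prop :=
  le x y ∧ x ≠ y ∧ ∀ z, le x z → le z y → z = x ∨ z = y

/-!
For `r ≤ 4` the block `L_r` is the product order of two explicit coordinates `f₁ f₂ : L_r → ℕ`,
and for each pair `(A_i, A_j)` there are cut levels `t₁, t₂` such that `↓A_i` is exactly the set of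
points strictly below both cuts and `↑A_j` the set of points weakly above both. Inserting the chain
at these levels (ordered lexicographically after the level) keeps the adjunct a product of two
coordinates, and the two lexicographic orders of such a product form a realizer. The bound
`Dim ≥ 2` comes from the incomparable pair `x₁`, `c₁₂`.
-/

open Function

section Realizer

variable {α : Type*}

theorem isLinearOrder_comap {γ : Type*} [LinearOrder γ] {f : α → γ} (hf : Injective f) :
    IsLinearOrder α (fun x y => f x ≤ f y) :=
  letI := LinearOrder.lift' f hf
  inferInstanceAs (IsLinearOrder α (· ≤ ·))

theorem toLex_le_and_swap_toLex_le_iff {γ₁ γ₂ : Type*} [LinearOrder γ₁] [LinearOrder γ₂]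
    {a c : γ₁} {b d : γ₂} :
    toLex (a, b) ≤ toLex (c, d) ∧ toLex (b, a) ≤ toLex (d, c) ↔ a ≤ c ∧ b ≤ d := by
  simp only [Prod.Lex.toLex_le_toLex]
  constructor
  · rintro ⟨hac | ⟨rfl, hbd⟩, hbd' | ⟨rfl, hac'⟩⟩
    · exact ⟨hac.le, hbd'.le⟩
    · exact ⟨hac', le_rfl⟩
    · exact ⟨le_rfl, hbd⟩
    · exact ⟨le_rfl, hbd⟩
  · rintro ⟨hac, hbd⟩
    exact ⟨hac.lt_or_eq.imp_right (⟨·, hbd⟩), hbd.lt_or_eq.imp_right (⟨·, hac⟩)⟩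

/-- A relation cut out by the product order of two coordinates is realized by the two
lexicographic orders, one for each priority of the coordinates. -/
theorem exists_realizer_two {γ₁ γ₂ : Type*} [LinearOrder γ₁] [LinearOrder γ₂]
    {le : α → α → Prop} (F : α → γ₁) (G : α → γ₂)
    (hle : ∀ x y, le x y ↔ F x ≤ F y ∧ G x ≤ G y)
    (hanti : ∀ x y, le x y → le y x → x = y) :
    ∃ R : Fin 2 → α → α → Prop, IsRealizer le R := by
  have hFG : Injective fun x => toLex (F x, G x) := fun x y hxy => by
    simp only [toLex_inj, Prod.mk.injEq] at hxy
    exact hanti x y ((hle x y).2 ⟨hxy.1.le, hxy.2.le⟩) ((hle y x).2 ⟨hxy.1.ge, hxy.2.ge⟩)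
  have hGF : Injective fun x => toLex (G x, F x) := fun x y hxy => by
    simp only [toLex_inj, Prod.mk.injEq] at hxy
    exact hFG (by simp only [hxy.1, hxy.2])
  refine ⟨![fun x y => toLex (F x, G x) ≤ toLex (F y, G y),
    fun x y => toLex (G x, F x) ≤ toLex (G y, F y)], ?_, fun x y => ?_⟩
  · intro k
    fin_cases k
    exacts [isLinearOrder_comap hFG, isLinearOrder_comap hGF]
  · simp only [hle, Fin.forall_fin_two, Matrix.cons_val_zero, Matrix.cons_val_one]
    exact toLex_le_and_swap_toLex_le_iff.symm

theorem IsRealizer.two_le {le : α → α → Prop} {t : ℕ} {R : Fin t → α → α → Prop}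
    (hR : IsRealizer le R) (ht : 0 < t) {u v : α} (huv : IncompRel le u v) : 2 ≤ t := by
  by_contra! ht1
  obtain rfl : t = 1 := by omega
  rcases (hR.1 0).total u v with h | h
  · exact huv.1 ((hR.2 u v).2 (Fin.forall_fin_one.2 h))
  · exact huv.2 ((hR.2 v u).2 (Fin.forall_fin_one.2 h))

theorem orderDim_eq_two {le : α → α → Prop} (h : ∃ R : Fin 2 → α → α → Prop, IsRealizer le R)
    {u v : α} (huv : IncompRel le u v) : orderDim le = 2 :=
  le_antisymm (Nat.sInf_le ⟨two_pos, h⟩)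
    (le_csInf ⟨2, two_pos, h⟩ fun _ ⟨ht, _, hR⟩ => hR.two_le ht huv)

end Realizer

section Adjunct

variable {α β γ : Type*} [LinearOrder β] [LinearOrder γ]

/-- The chain `β` is placed just below level `t`; elements of `α` at level `t` stay above it
because they carry `⊤` in the second component. -/
def adjunctCoord (f : α → γ) (t : γ) : α ⊕ β → γ ×ₗ WithTop β :=
  Sum.elim (fun x => toLex (f x, ⊤)) (fun c => toLex (t, (c : WithTop β)))

section AdjunctCoord
variable (f : α → γ) (t : γ)

@[simp] theorem adjunctCoord_inl_le_inl {x y : α} :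
    adjunctCoord (β := β) f t (.inl x) ≤ adjunctCoord f t (.inl y) ↔ f x ≤ f y := by
  simp [adjunctCoord, Prod.Lex.toLex_le_toLex, ← le_iff_lt_or_eq]

@[simp] theorem adjunctCoord_inl_le_inr {x : α} {c : β} :
    adjunctCoord f t (.inl x) ≤ adjunctCoord f t (.inr c) ↔ f x < t := by
  simp [adjunctCoord, Prod.Lex.toLex_le_toLex]

@[simp] theorem adjunctCoord_inr_le_inl {c : β} {x : α} :
    adjunctCoord f t (.inr c) ≤ adjunctCoord f t (.inl x) ↔ t ≤ f x := by
  simp [adjunctCoord, Prod.Lex.toLex_le_toLex, ← le_iff_lt_or_eq]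

@[simp] theorem adjunctCoord_inr_le_inr {c d : β} :
    adjunctCoord (α := α) f t (.inr c) ≤ adjunctCoord f t (.inr d) ↔ c ≤ d := by
  simp [adjunctCoord, Prod.Lex.toLex_le_toLex]

end AdjunctCoord

variable [PartialOrder α]

/-- Levels at which a chain can be inserted into both coordinates so that it lies above exactly
`↓a` and below exactly `↑b`. -/
def IsAdjunctSlot {γ₁ γ₂ : Type*} [LinearOrder γ₁] [LinearOrder γ₂] (f₁ : α → γ₁) (f₂ : α → γ₂)
    (a b : α) (t₁ : γ₁) (t₂ : γ₂) : Prop :=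
  (∀ x, x ≤ a ↔ f₁ x < t₁ ∧ f₂ x < t₂) ∧ ∀ x, b ≤ x ↔ t₁ ≤ f₁ x ∧ t₂ ≤ f₂ x

instance {γ₁ γ₂ : Type*} [LinearOrder γ₁] [LinearOrder γ₂] [Fintype α]
    [DecidableRel (α := α) (· ≤ ·)] (f₁ : α → γ₁) (f₂ : α → γ₂) (a b : α) (t₁ : γ₁) (t₂ : γ₂) :
    Decidable (IsAdjunctSlot f₁ f₂ a b t₁ t₂) :=
  inferInstanceAs (Decidable (_ ∧ _))

theorem exists_realizer_two_adjunctLE {γ₁ γ₂ : Type*} [LinearOrder γ₁] [LinearOrder γ₂]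
    {f₁ : α → γ₁} {f₂ : α → γ₂} (hf : ∀ x y, x ≤ y ↔ f₁ x ≤ f₁ y ∧ f₂ x ≤ f₂ y)
    {a b : α} {t₁ : γ₁} {t₂ : γ₂} (hslot : IsAdjunctSlot f₁ f₂ a b t₁ t₂) :
    ∃ R : Fin 2 → α ⊕ β → α ⊕ β → Prop, IsRealizer (adjunctLE a b) R := by
  refine exists_realizer_two (adjunctCoord f₁ t₁) (adjunctCoord f₂ t₂) ?_ ?_
  · rintro (x | c) (y | d) <;>
      simp only [adjunctLE, adjunctCoord_inl_le_inl, adjunctCoord_inl_le_inr,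
        adjunctCoord_inr_le_inl, adjunctCoord_inr_le_inr]
    exacts [hf x y, hslot.1 x, hslot.2 y, and_self_iff.symm]
  · rintro (x | c) (y | d) hxy hyx
    · exact congrArg Sum.inl (le_antisymm hxy hyx)
    · exact absurd ((hslot.2 x).1 hyx).1 ((hslot.1 x).1 hxy).1.not_ge
    · exact absurd ((hslot.2 y).1 hxy).1 ((hslot.1 y).1 hyx).1.not_ge
    · exact congrArg Sum.inr (le_antisymm hxy hyx)

end Adjunct

namespace Lr

instance (r : ℕ) : Fintype (Lr r) :=
  inferInstanceAs (Fintype (Fin (2 * r - 1) ⊕ {p : Fin r × Fin r // (p.1 : ℕ) < (p.2 : ℕ)}))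

instance (r : ℕ) : DecidableRel (α := Lr r) (· ≤ ·)
  | Sum.inl k, Sum.inl k' => inferInstanceAs (Decidable ((k : ℕ) ≤ (k' : ℕ)))
  | Sum.inl k, Sum.inr c => inferInstanceAs (Decidable ((k : ℕ) ≤ 2 * (c.1.1 : ℕ)))
  | Sum.inr c, Sum.inl k => inferInstanceAs (Decidable (2 * (c.1.2 : ℕ) ≤ (k : ℕ)))
  | Sum.inr c, Sum.inr c' => inferInstanceAs (Decidable
      (((c.1.1 : ℕ) = (c'.1.1 : ℕ) ∧ (c.1.2 : ℕ) = (c'.1.2 : ℕ)) ∨ (c.1.2 : ℕ) ≤ (c'.1.1 : ℕ)))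

theorem incompRel_X_c {r : ℕ} (hr : 2 ≤ r) :
    IncompRel (· ≤ ·) (X ⟨0, by omega⟩ : Lr r)
      (c ⟨0, by omega⟩ ⟨1, by omega⟩ Nat.zero_lt_one) := by
  constructor <;> intro h <;> change Lr.le _ _ at h <;> simp [Lr.le, X, c] at h

/-- Coordinates read off a table: `chain` lists the values along `A₁ x₁ A₂ ⋯ A_r`, and row `i`
of `cs` the values at `c_{i,i+1}, c_{i,i+2}, …` (indices `0`-based). -/
def coord {r : ℕ} (chain : List ℕ) (cs : List (List ℕ)) : Lr r → ℕ
  | Sum.inl k => chain.getD k 0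
  | Sum.inr c => (cs.getD c.1.1 []).getD (c.1.2 - c.1.1 - 1) 0

theorem exists_coords_isAdjunctSlot (r : ℕ) (h2 : 2 ≤ r) (h4 : r ≤ 4) :
    ∃ f₁ f₂ : Lr r → ℕ, (∀ x y, x ≤ y ↔ f₁ x ≤ f₁ y ∧ f₂ x ≤ f₂ y) ∧
      ∀ i j : Fin r, (i : ℕ) < j → ∃ u v, IsAdjunctSlot f₁ f₂ (A i) (A j) (f₁ u) (f₂ v) := by
  interval_cases r
  · exact ⟨coord [0, 2, 3] [[1]], coord [0, 1, 3] [[2]], by decide⟩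
  · exact ⟨coord [0, 2, 3, 4, 7] [[1, 6], [5]], coord [0, 2, 4, 6, 7] [[3, 1], [5]], by decide⟩
  · exact ⟨coord [0, 2, 3, 5, 8, 9, 12] [[1, 7, 11], [6, 4], [10]],
      coord [0, 3, 5, 7, 8, 10, 12] [[4, 2, 1], [6, 11], [9]], by decide⟩

end Lr

theorem dim_Lr_adjunct_chain_small_general (r : ℕ) (h2 : 2 ≤ r) (h4 : r ≤ 4)
    {β : Type*} [LinearOrder β]
    (i j : Fin r) (hij : (i : ℕ) < (j : ℕ)) :
    orderDim (adjunctLE (α := Lr r) (β := β) (Lr.A i) (Lr.A j)) = 2 := by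
  obtain ⟨f₁, f₂, hf, hslots⟩ := Lr.exists_coords_isAdjunctSlot r h2 h4
  obtain ⟨u, v, hslot⟩ := hslots i j hij
  exact orderDim_eq_two (exists_realizer_two_adjunctLE hf hslot) (u := .inl _) (v := .inl _)
    (Lr.incompRel_X_c h2)

/-- for `2 ≤ r ≤ 4`, adjoining a finite nonempty chain to `L_r`
along the adjunct pair `(A_i, A_j)` (`1 ≤ i < j ≤ r`) yields a lattice of
order dimension `2`. -/
theorem dim_Lr_adjunct_chain_small (r : ℕ) (h2 : 2 ≤ r) (h4 : r ≤ 4)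
    {β : Type*} [LinearOrder β] [Finite β] [Nonempty β]
    (i j : Fin r) (hij : (i : ℕ) < (j : ℕ)) :
    orderDim (adjunctLE (α := Lr r) (β := β) (Lr.A i) (Lr.A j)) = 2 :=
  dim_Lr_adjunct_chain_small_general r h2 h4 i j hij
end

section
/- Let L₁ and L₂ be finite lattices and let L = L₁ ]ᵇₐ L₂ be their adjunct with respect to a pair a < b in L₁ with b not covering a. Then the adjunct order on L₁ ∪ L₂ is a lattice, and both L₁ and L₂ (with their original orders) are sublattices of L. -/
/-! Order: `a ≤ b` gives transitivity along `L₁ → L₂ → L₁`, and `a < b` rules out `L₂ → L₁ → L₂`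
(it would force `b ≤ a`). Lattice: the join of `x ∈ L₁` and `y ∈ L₂` is `y` when `x ≤ a` and
`x ⊔ b` otherwise; dually their meet is `y` when `b ≤ x` and `x ⊓ a` otherwise. -/

theorem IsLUBRel.symm {γ : Type*} {le : γ → γ → Prop} {x y s : γ} (h : IsLUBRel le x y s) :
    IsLUBRel le y x s :=
  ⟨h.2.1, h.1, fun z hy hx => h.2.2 z hx hy⟩

theorem IsGLBRel.symm {γ : Type*} {le : γ → γ → Prop} {x y s : γ} (h : IsGLBRel le x y s) :
    IsGLBRel le y x s :=
  ⟨h.2.1, h.1, fun z hy hx => h.2.2 z hx hy⟩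

namespace adjunctLE

open Sum

variable {α β : Type*} {a b : α}

theorem isPartialOrder [PartialOrder α] [PartialOrder β] (hab : a < b) :
    IsPartialOrder (α ⊕ β) (adjunctLE a b) where
  refl := by rintro (x | x) <;> exact le_rfl
  trans := by
    rintro (x | x) (y | y) (z | z) hxy hyz <;> simp only [adjunctLE] at * <;> order
  antisymm := by
    rintro (x | x) (y | y) hxy hyx <;> simp only [adjunctLE, inl.injEq, inr.injEq] at * <;> order

theorem isLUBRel_inl_inl [Lattice α] [LE β] (x y : α) :
    IsLUBRel (adjunctLE (β := β) a b) (inl x) (inl y) (inl (x ⊔ y)) := by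
  refine ⟨le_sup_left, le_sup_right, ?_⟩
  rintro (z | z) hxz hyz
  exacts [sup_le hxz hyz, sup_le hxz hyz]

theorem isLUBRel_inl_inr_of_le [LE α] [Preorder β] {x : α} (hx : x ≤ a) (y : β) :
    IsLUBRel (adjunctLE a b) (inl x) (inr y) (inr y) := by
  refine ⟨hx, le_rfl, ?_⟩
  rintro (z | z) _ hyz
  exacts [hyz, hyz]

theorem isLUBRel_inl_inr_of_not_le [Lattice α] [LE β] {x : α} (hx : ¬x ≤ a) (y : β) :
    IsLUBRel (adjunctLE a b) (inl x) (inr y) (inl (x ⊔ b)) := by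
  refine ⟨le_sup_left, le_sup_right, ?_⟩
  rintro (z | z) hxz hyz
  exacts [sup_le hxz hyz, absurd hxz hx]

theorem isLUBRel_inr_inr [LE α] [Lattice β] (x y : β) :
    IsLUBRel (adjunctLE a b) (inr x) (inr y) (inr (x ⊔ y)) := by
  refine ⟨le_sup_left, le_sup_right, ?_⟩
  rintro (z | z) hxz hyz
  exacts [hxz, sup_le hxz hyz]

theorem exists_isLUBRel [Lattice α] [Lattice β] (x y : α ⊕ β) :
    ∃ s, IsLUBRel (adjunctLE a b) x y s := by
  have mixed (x : α) (y : β) : ∃ s, IsLUBRel (adjunctLE a b) (inl x) (inr y) s := by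
    by_cases hx : x ≤ a
    exacts [⟨_, isLUBRel_inl_inr_of_le hx y⟩, ⟨_, isLUBRel_inl_inr_of_not_le hx y⟩]
  rcases x with x | x <;> rcases y with y | y
  · exact ⟨_, isLUBRel_inl_inl x y⟩
  · exact mixed x y
  · obtain ⟨s, hs⟩ := mixed y x
    exact ⟨s, hs.symm⟩
  · exact ⟨_, isLUBRel_inr_inr x y⟩

theorem isGLBRel_inl_inl [Lattice α] [LE β] (x y : α) :
    IsGLBRel (adjunctLE (β := β) a b) (inl x) (inl y) (inl (x ⊓ y)) := by
  refine ⟨inf_le_left, inf_le_right, ?_⟩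
  rintro (z | z) hzx hzy
  exacts [le_inf hzx hzy, le_inf hzx hzy]

theorem isGLBRel_inl_inr_of_le [LE α] [Preorder β] {x : α} (hx : b ≤ x) (y : β) :
    IsGLBRel (adjunctLE a b) (inl x) (inr y) (inr y) := by
  refine ⟨hx, le_rfl, ?_⟩
  rintro (z | z) _ hzy
  exacts [hzy, hzy]

theorem isGLBRel_inl_inr_of_not_le [Lattice α] [LE β] {x : α} (hx : ¬b ≤ x) (y : β) :
    IsGLBRel (adjunctLE a b) (inl x) (inr y) (inl (x ⊓ a)) := by
  refine ⟨inf_le_left, inf_le_right, ?_⟩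
  rintro (z | z) hzx hzy
  exacts [le_inf hzx hzy, absurd hzx hx]

theorem isGLBRel_inr_inr [LE α] [Lattice β] (x y : β) :
    IsGLBRel (adjunctLE a b) (inr x) (inr y) (inr (x ⊓ y)) := by
  refine ⟨inf_le_left, inf_le_right, ?_⟩
  rintro (z | z) hzx hzy
  exacts [hzx, le_inf hzx hzy]

theorem exists_isGLBRel [Lattice α] [Lattice β] (x y : α ⊕ β) :
    ∃ s, IsGLBRel (adjunctLE a b) x y s := by
  have mixed (x : α) (y : β) : ∃ s, IsGLBRel (adjunctLE a b) (inl x) (inr y) s := by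
    by_cases hx : b ≤ x
    exacts [⟨_, isGLBRel_inl_inr_of_le hx y⟩, ⟨_, isGLBRel_inl_inr_of_not_le hx y⟩]
  rcases x with x | x <;> rcases y with y | y
  · exact ⟨_, isGLBRel_inl_inl x y⟩
  · exact mixed x y
  · obtain ⟨s, hs⟩ := mixed y x
    exact ⟨s, hs.symm⟩
  · exact ⟨_, isGLBRel_inr_inr x y⟩

end adjunctLE

theorem adjunct_is_lattice_general {α β : Type*} [Lattice α] [Lattice β]
    {a b : α} (hab : a < b) :
    IsPartialOrder (α ⊕ β) (adjunctLE a b) ∧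
    (∀ x y : α ⊕ β, ∃ s, IsLUBRel (adjunctLE a b) x y s) ∧
    (∀ x y : α ⊕ β, ∃ s, IsGLBRel (adjunctLE a b) x y s) ∧
    (∀ x y : α,
      IsLUBRel (adjunctLE (α := α) (β := β) a b)
        (Sum.inl x) (Sum.inl y) (Sum.inl (x ⊔ y)) ∧
      IsGLBRel (adjunctLE (α := α) (β := β) a b)
        (Sum.inl x) (Sum.inl y) (Sum.inl (x ⊓ y))) ∧
    (∀ x y : β,
      IsLUBRel (adjunctLE (α := α) (β := β) a b)
        (Sum.inr x) (Sum.inr y) (Sum.inr (x ⊔ y)) ∧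
      IsGLBRel (adjunctLE (α := α) (β := β) a b)
        (Sum.inr x) (Sum.inr y) (Sum.inr (x ⊓ y))) :=
  ⟨adjunctLE.isPartialOrder hab, adjunctLE.exists_isLUBRel, adjunctLE.exists_isGLBRel,
    fun x y => ⟨adjunctLE.isLUBRel_inl_inl x y, adjunctLE.isGLBRel_inl_inl x y⟩,
    fun x y => ⟨adjunctLE.isLUBRel_inr_inr x y, adjunctLE.isGLBRel_inr_inr x y⟩⟩

/-- the adjunct order of two finite lattices is a lattice, and
both summands are sublattices of it (the joins and meets computed in the
adjunct of elements of `L₁` (resp. `L₂`) agree with those of `L₁`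
(resp. `L₂`)). -/
theorem adjunct_is_lattice {α β : Type*} [Lattice α] [Lattice β]
    [Finite α] [Finite β] {a b : α} (hab : a < b) (hcov : ¬ a ⋖ b) :
    IsPartialOrder (α ⊕ β) (adjunctLE a b) ∧
    (∀ x y : α ⊕ β, ∃ s, IsLUBRel (adjunctLE a b) x y s) ∧
    (∀ x y : α ⊕ β, ∃ s, IsGLBRel (adjunctLE a b) x y s) ∧
    (∀ x y : α,
      IsLUBRel (adjunctLE (α := α) (β := β) a b)
        (Sum.inl x) (Sum.inl y) (Sum.inl (x ⊔ y)) ∧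
      IsGLBRel (adjunctLE (α := α) (β := β) a b)
        (Sum.inl x) (Sum.inl y) (Sum.inl (x ⊓ y))) ∧
    (∀ x y : β,
      IsLUBRel (adjunctLE (α := α) (β := β) a b)
        (Sum.inr x) (Sum.inr y) (Sum.inr (x ⊔ y)) ∧
      IsGLBRel (adjunctLE (α := α) (β := β) a b)
        (Sum.inr x) (Sum.inr y) (Sum.inr (x ⊓ y))) :=
  adjunct_is_lattice_general hab
end

section
/- Let L₁ and L₂ be finite lattices with least element 0₂ and greatest element 1₂ of L₂, and let L = L₁ ]ᵇₐ L₂ be their adjunct with respect to a pair a < b in L₁ with b not covering a. Then the covering pairs of L are exactly: the covering pairs of L₁, the covering pairs of L₂, the pair (a, 0₂), and the pair (1₂, b). Consequently, the number of covering pairs of L equals |E(L₁)| + |E(L₂)| + 2, where E denotes the set of covering pairs. -/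
section AdjunctCovers

variable {α β : Type*} [PartialOrder α] [PartialOrder β] {a b : α}

theorem CovBy.covBy_of_le_of_le {u v : α} (h : u ⋖ v) (hua : u ≤ a) (hab : a < b)
    (hbv : b ≤ v) : a ⋖ b :=
  ((h.wcovBy.of_le_of_le hua (hab.le.trans hbv)).of_le_of_le' hbv hab.le).covBy_of_lt hab

/-- An element of `β` between `u` and `v` in the adjunct forces `u ≤ a < b ≤ v`, which is ruled
out by `u ⋖ v` exactly because `b` does not cover `a`. -/
theorem relCovBy_adjunctLE_inl_inl_iff (hab : a < b) (hcov : ¬ a ⋖ b) {u v : α} :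
    RelCovBy (adjunctLE (β := β) a b) (.inl u) (.inl v) ↔ u ⋖ v := by
  constructor
  · rintro ⟨huv, hne, hbtw⟩
    refine ⟨lt_of_le_of_ne huv (by simpa using hne), fun c huc hcv => ?_⟩
    obtain h | h := hbtw (.inl c) huc.le hcv.le
    · exact huc.ne' (Sum.inl_injective h)
    · exact hcv.ne (Sum.inl_injective h)
  · refine fun h => ⟨h.le, by simpa using h.ne, ?_⟩
    rintro (w | w) huw hwv
    · exact (h.eq_or_eq huw hwv).imp (congrArg _) (congrArg _)
    · exact (hcov (h.covBy_of_le_of_le huw hab hwv)).elim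

theorem relCovBy_adjunctLE_inr_inr_iff (hab : a < b) {u v : β} :
    RelCovBy (adjunctLE a b) (.inr u : α ⊕ β) (.inr v) ↔ u ⋖ v := by
  constructor
  · rintro ⟨huv, hne, hbtw⟩
    refine ⟨lt_of_le_of_ne huv (by simpa using hne), fun c huc hcv => ?_⟩
    obtain h | h := hbtw (.inr c) huc.le hcv.le
    · exact huc.ne' (Sum.inr_injective h)
    · exact hcv.ne (Sum.inr_injective h)
  · refine fun h => ⟨h.le, by simpa using h.ne, ?_⟩
    rintro (w | w) hbw hwa
    · exact (hab.not_ge (le_trans (b := w) hbw hwa)).elim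
    · exact (h.eq_or_eq hbw hwa).imp (congrArg _) (congrArg _)

theorem relCovBy_adjunctLE_inl_inr_iff [OrderBot β] {u : α} {v : β} :
    RelCovBy (adjunctLE a b) (.inl u) (.inr v : α ⊕ β) ↔ u = a ∧ v = ⊥ := by
  constructor
  · rintro ⟨hua, -, hbtw⟩
    refine ⟨?_, ?_⟩
    · simpa [eq_comm] using hbtw (.inl a) hua le_rfl
    · simpa [eq_comm] using hbtw (.inr ⊥) hua bot_le
  · rintro ⟨rfl, rfl⟩
    refine ⟨le_rfl, Sum.inl_ne_inr, ?_⟩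
    rintro (w | w) huw hwv
    · exact .inl (congrArg _ (le_antisymm hwv huw))
    · exact .inr (congrArg _ (le_bot_iff.mp hwv))

theorem relCovBy_adjunctLE_inr_inl_iff [OrderTop β] {u : β} {v : α} :
    RelCovBy (adjunctLE a b) (.inr u : α ⊕ β) (.inl v) ↔ u = ⊤ ∧ v = b := by
  constructor
  · rintro ⟨hbv, -, hbtw⟩
    refine ⟨?_, ?_⟩
    · simpa [eq_comm] using hbtw (.inr ⊤) le_top hbv
    · simpa [eq_comm] using hbtw (.inl b) le_rfl hbv
  · rintro ⟨rfl, rfl⟩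
    refine ⟨le_rfl, Sum.inr_ne_inl, ?_⟩
    rintro (w | w) huw hwv
    · exact .inr (congrArg _ (le_antisymm hwv huw))
    · exact .inl (congrArg _ (top_le_iff.mp huw))

/-- `false` and `true` stand for the covering pairs `(a, ⊥)` and `(⊤, b)`. -/
def adjunctCovByEquiv [BoundedOrder β] (hab : a < b) (hcov : ¬ a ⋖ b) :
    {p : (α ⊕ β) × (α ⊕ β) // RelCovBy (adjunctLE a b) p.1 p.2} ≃
      {p : α × α // p.1 ⋖ p.2} ⊕ {p : β × β // p.1 ⋖ p.2} ⊕ Bool where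
  toFun
    | ⟨(.inl u, .inl v), h⟩ => .inl ⟨(u, v), (relCovBy_adjunctLE_inl_inl_iff hab hcov).mp h⟩
    | ⟨(.inr u, .inr v), h⟩ => .inr (.inl ⟨(u, v), (relCovBy_adjunctLE_inr_inr_iff hab).mp h⟩)
    | ⟨(.inl _, .inr _), _⟩ => .inr (.inr false)
    | ⟨(.inr _, .inl _), _⟩ => .inr (.inr true)
  invFun
    | .inl ⟨(u, v), h⟩ => ⟨(.inl u, .inl v), (relCovBy_adjunctLE_inl_inl_iff hab hcov).mpr h⟩
    | .inr (.inl ⟨(u, v), h⟩) => ⟨(.inr u, .inr v), (relCovBy_adjunctLE_inr_inr_iff hab).mpr h⟩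
    | .inr (.inr false) => ⟨(.inl a, .inr ⊥), relCovBy_adjunctLE_inl_inr_iff.mpr ⟨rfl, rfl⟩⟩
    | .inr (.inr true) => ⟨(.inr ⊤, .inl b), relCovBy_adjunctLE_inr_inl_iff.mpr ⟨rfl, rfl⟩⟩
  left_inv := by
    rintro ⟨⟨u | u, v | v⟩, h⟩
    · rfl
    · obtain ⟨rfl, rfl⟩ := relCovBy_adjunctLE_inl_inr_iff.mp h
      rfl
    · obtain ⟨rfl, rfl⟩ := relCovBy_adjunctLE_inr_inl_iff.mp h
      rfl
    · rfl
  right_inv := by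
    rintro (_ | _ | _ | _) <;> rfl

end AdjunctCovers

/-- the covering pairs of the adjunct `L = L₁ ]ᵇₐ L₂` are
exactly the covering pairs of `L₁`, the covering pairs of `L₂`, the pair
`(a, 0₂)` and the pair `(1₂, b)`; consequently
`|E(L)| = |E(L₁)| + |E(L₂)| + 2`. -/
theorem covers_of_adjunct {α β : Type*} [Lattice α] [Lattice β]
    [Finite α] [Finite β] [BoundedOrder β]
    {a b : α} (hab : a < b) (hcov : ¬ a ⋖ b) :
    (∀ x y : α ⊕ β, RelCovBy (adjunctLE a b) x y ↔
      ((∃ u v : α, x = Sum.inl u ∧ y = Sum.inl v ∧ u ⋖ v) ∨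
       (∃ u v : β, x = Sum.inr u ∧ y = Sum.inr v ∧ u ⋖ v) ∨
       (x = Sum.inl a ∧ y = Sum.inr (⊥ : β)) ∨
       (x = Sum.inr (⊤ : β) ∧ y = Sum.inl b))) ∧
    Nat.card {p : (α ⊕ β) × (α ⊕ β) // RelCovBy (adjunctLE a b) p.1 p.2} =
      Nat.card {p : α × α // p.1 ⋖ p.2} +
        Nat.card {p : β × β // p.1 ⋖ p.2} + 2 := by
  constructor
  · rintro (u | u) (v | v) <;>
      simp [relCovBy_adjunctLE_inl_inl_iff hab hcov, relCovBy_adjunctLE_inr_inr_iff hab,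
        relCovBy_adjunctLE_inl_inr_iff, relCovBy_adjunctLE_inr_inl_iff]
  · rw [Nat.card_congr (adjunctCovByEquiv hab hcov), Nat.card_sum, Nat.card_sum,
      Nat.card_eq_fintype_card (α := Bool), Fintype.card_bool, add_assoc]
end
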